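/- A permutation π of [n] contains the vincular pattern 3\underline{14}2 if and only if its inverse π⁻¹ contains the pattern \overline{2}41\overline{3}; likewise π contains 2\underline{41}3 iff π⁻¹ contains \overline{3}14\overline{2}. -/
import Mathlib


namespace Paper

variable {n : ℕ}

/-- The 1-based position corresponding to `i : Fin n`. -/
def pv (i : Fin n) : ℕ := (i : ℕ) + 1

/-- The 1-based letter of the word `f` at 1-based position `k` (0 if out of range). -/
def valAt (f : Fin n → Fin n) (k : ℕ) : ℕ :=
  if h : 1 ≤ k ∧ k ≤ n then ((f ⟨k - 1, by omega⟩ : Fin n) : ℕ) + 1 else 0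

/-- The map θ̂ : the 1-based `i`-th letter of `hatTheta f` is `σ̂_{n+1-i}`,
where `σ̂ₐ = n - a` (1-based) if `a < n` and `n̂ = n`. (0-based encoding.) -/
def hatTheta (f : Fin n → Fin n) (i : Fin n) : Fin n :=
  if ((f i.rev : ℕ)) = n - 1 then f i.rev
  else ⟨n - 2 - (f i.rev : ℕ), by have := i.isLt; omega⟩

end Paper

namespace Paper

variable {n : ℕ}

/-- `f` contains the vincular pattern 3\underline{14}2:
∃ i < j, j+1 < ℓ with σⱼ < σ_ℓ < σᵢ < σ_{j+1} (1-based). -/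
def Contains3142 (f : Fin n → Fin n) : Prop :=
  ∃ i j l : Fin n, pv i < pv j ∧ pv j + 1 < pv l ∧
    valAt f (pv j) < valAt f (pv l) ∧ valAt f (pv l) < valAt f (pv i) ∧
    valAt f (pv i) < valAt f (pv j + 1)

/-- `f` contains the vincular pattern 2\underline{41}3:
∃ i < j, j+1 < ℓ with σ_{j+1} < σᵢ < σ_ℓ < σⱼ (1-based). -/
def Contains2413 (f : Fin n → Fin n) : Prop :=
  ∃ i j l : Fin n, pv i < pv j ∧ pv j + 1 < pv l ∧
    valAt f (pv j + 1) < valAt f (pv i) ∧ valAt f (pv i) < valAt f (pv l) ∧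
    valAt f (pv l) < valAt f (pv j)

/-- `f` contains \overline{2}41\overline{3}:
∃ i < j < k < ℓ with σₖ < σᵢ < σ_ℓ = σᵢ + 1 < σⱼ. -/
def Contains2b41_3b (f : Fin n → Fin n) : Prop :=
  ∃ i j k l : Fin n, pv i < pv j ∧ pv j < pv k ∧ pv k < pv l ∧
    valAt f (pv k) < valAt f (pv i) ∧ valAt f (pv l) = valAt f (pv i) + 1 ∧
    valAt f (pv i) + 1 < valAt f (pv j)

/-- `f` contains \overline{3}14\overline{2}:
∃ i < j < k < ℓ with σⱼ < σ_ℓ < σᵢ = σ_ℓ + 1 < σₖ. -/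
def Contains3b14_2b (f : Fin n → Fin n) : Prop :=
  ∃ i j k l : Fin n, pv i < pv j ∧ pv j < pv k ∧ pv k < pv l ∧
    valAt f (pv j) < valAt f (pv l) ∧ valAt f (pv i) = valAt f (pv l) + 1 ∧
    valAt f (pv l) + 1 < valAt f (pv k)


lemma valAt_pv (f : Fin n → Fin n) (i : Fin n) : valAt f (pv i) = (f i : ℕ) + 1 := by
  have h := i.isLt
  rw [valAt, dif_pos (by simp only [pv]; omega)]
  simp [pv]

lemma valAt_succ (f : Fin n → Fin n) (j : Fin n) (h : (j : ℕ) + 1 < n) :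
    valAt f (pv j + 1) = (f ⟨(j : ℕ) + 1, h⟩ : ℕ) + 1 := by
  rw [valAt, dif_pos (by simp only [pv]; omega)]
  simp [pv]

/-- A Baxter permutation avoids both 3\underline{14}2 and 2\underline{41}3. -/
def IsBaxter (f : Fin n → Fin n) : Prop :=
  ¬ Contains3142 f ∧ ¬ Contains2413 f

end Paper

namespace Paper

/-- π contains 3\underline{14}2 iff π⁻¹ contains \overline{2}41\overline{3},
and π contains 2\underline{41}3 iff π⁻¹ contains \overline{3}14\overline{2}. -/
theorem contains_iff_inverse (n : ℕ) (π : Equiv.Perm (Fin n)) :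
    (Contains3142 ⇑π ↔ Contains2b41_3b ⇑π.symm) ∧
    (Contains2413 ⇑π ↔ Contains3b14_2b ⇑π.symm) := by
  constructor
  · constructor
    · rintro ⟨i, j, l, h1, h2, h3, h4, h5⟩
      have hl := l.isLt
      simp only [pv] at h1 h2
      have hj1 : (j : ℕ) + 1 < n := by omega
      simp only [valAt_pv] at h3 h4 h5
      rw [valAt_succ _ _ hj1] at h5
      set j1 : Fin n := ⟨(j : ℕ) + 1, hj1⟩ with hj1d
      refine ⟨π j, π l, π i, π j1, ?_, ?_, ?_, ?_, ?_, ?_⟩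
      · simp only [pv]; omega
      · simp only [pv]; omega
      · simp only [pv]; omega
      · simp only [valAt_pv]
        simp only [Equiv.symm_apply_apply]; omega
      · simp only [valAt_pv]
        simp only [Equiv.symm_apply_apply, hj1d]
      · simp only [valAt_pv]
        simp only [Equiv.symm_apply_apply, hj1d]; omega
    · rintro ⟨i', j', k', l', hij, hjk, hkl, h4, h5, h6⟩
      simp only [valAt_pv] at h4 h5 h6
      simp only [pv] at hij hjk hkl
      set a := π.symm i' with ha
      set b := π.symm j' with hb
      set c := π.symm k' with hc
      set d := π.symm l' with hd
      have hda : (d : ℕ) = (a : ℕ) + 1 := by omega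
      have han : (a : ℕ) + 1 < n := hda ▸ d.isLt
      refine ⟨c, a, b, ?_, ?_, ?_, ?_, ?_⟩
      · simp only [pv]; omega
      · simp only [pv]; omega
      · simp only [valAt_pv]
        rw [ha, hb, π.apply_symm_apply, π.apply_symm_apply]; omega
      · simp only [valAt_pv]
        rw [hb, hc, π.apply_symm_apply, π.apply_symm_apply]; omega
      · rw [valAt_succ _ _ han]; simp only [valAt_pv]
        have hfd : (⟨(a : ℕ) + 1, han⟩ : Fin n) = d := by simp only [Fin.ext_iff, Fin.val_mk]; omega
        rw [hfd, hc, hd, π.apply_symm_apply, π.apply_symm_apply]; omega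
  · constructor
    · rintro ⟨i, j, l, h1, h2, h3, h4, h5⟩
      have hl := l.isLt
      simp only [pv] at h1 h2
      have hj1 : (j : ℕ) + 1 < n := by omega
      simp only [valAt_pv] at h3 h4 h5
      rw [valAt_succ _ _ hj1] at h3
      set j1 : Fin n := ⟨(j : ℕ) + 1, hj1⟩ with hj1d
      refine ⟨π j1, π i, π l, π j, ?_, ?_, ?_, ?_, ?_, ?_⟩
      · simp only [pv]; omega
      · simp only [pv]; omega
      · simp only [pv]; omega
      · simp only [valAt_pv]
        simp only [Equiv.symm_apply_apply]; omega
      · simp only [valAt_pv]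
        simp only [Equiv.symm_apply_apply, hj1d]
      · simp only [valAt_pv]
        simp only [Equiv.symm_apply_apply, hj1d]; omega
    · rintro ⟨i', j', k', l', hij, hjk, hkl, h4, h5, h6⟩
      simp only [valAt_pv] at h4 h5 h6
      simp only [pv] at hij hjk hkl
      set a := π.symm i' with ha
      set b := π.symm j' with hb
      set c := π.symm k' with hc
      set d := π.symm l' with hd
      have had : (a : ℕ) = (d : ℕ) + 1 := by omega
      have hdn : (d : ℕ) + 1 < n := had ▸ a.isLt
      refine ⟨b, d, c, ?_, ?_, ?_, ?_, ?_⟩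
      · simp only [pv]; omega
      · simp only [pv]; omega
      · rw [valAt_succ _ _ hdn]; simp only [valAt_pv]
        have hfa : (⟨(d : ℕ) + 1, hdn⟩ : Fin n) = a := by simp only [Fin.ext_iff, Fin.val_mk]; omega
        rw [hfa, ha, hb, π.apply_symm_apply, π.apply_symm_apply]; omega
      · simp only [valAt_pv]
        rw [hb, hc, π.apply_symm_apply, π.apply_symm_apply]; omega
      · simp only [valAt_pv]
        rw [hc, hd, π.apply_symm_apply, π.apply_symm_apply]; omega

end Paper
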